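/- Technical q-binomial identity (Lemma 3.9): For all integers j, u and integers M, N with 0 ≤ M ≤ N, one has [M+1 choose j-u]_q [N-M choose u]_q − q^{2j-2u-M} [M+1 choose j-u+1]_q [N-M choose u-1]_q = q^j [M choose j-u]_q [N-M choose u]_q − q^{2j-2u-M} [M choose j-u+1]_q [N-M choose u-1]_q + [M choose j-u-1]_q [N-M choose u]_q − q^{N+j+1-2u-M} [M choose j-u]_q [N-M choose u-1]_q. -/
import Mathlib


/-- The q-Pochhammer symbol `(x;q)_k = ∏_{i=0}^{k-1} (1 - x q^i)`. -/
noncomputable def qp (q x : ℂ) (k : ℕ) : ℂ := ∏ i ∈ Finset.range k, (1 - x * q ^ i)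

/-- The Gaussian binomial coefficient `[N choose k]_q`, zero outside `0 ≤ k ≤ N`. -/
noncomputable def qbin (q : ℂ) (N k : ℤ) : ℂ :=
  if 0 ≤ k ∧ k ≤ N then qp q q N.toNat / (qp q q k.toNat * qp q q (N - k).toNat) else 0

lemma qp_zero (q : ℂ) : qp q q 0 = 1 := by simp [qp]

lemma qp_succ (q : ℂ) (k : ℕ) : qp q q (k + 1) = qp q q k * (1 - q ^ (k + 1)) := by
  rw [qp, Finset.prod_range_succ, ← qp]; ring

lemma qbin_neg (q : ℂ) (n k : ℤ) (h : k < 0) : qbin q n k = 0 := by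
  rw [qbin, if_neg]; intro hc; omega

lemma qbin_gt (q : ℂ) (n k : ℤ) (h : n < k) : qbin q n k = 0 := by
  rw [qbin, if_neg]; intro hc; omega

lemma qbin_natCast (q : ℂ) (n k : ℕ) (h : k ≤ n) :
    qbin q (n : ℤ) (k : ℤ) = qp q q n / (qp q q k * qp q q (n - k)) := by
  have h1 : ((n : ℤ) - k).toNat = n - k := by omega
  have h2 : ((n : ℤ)).toNat = n := by omega
  have h3 : ((k : ℤ)).toNat = k := by omega
  rw [qbin, if_pos ⟨by omega, by exact_mod_cast h⟩, h1, h2, h3]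

lemma qbin_zero (q : ℂ) (n : ℕ) (hn : qp q q n ≠ 0) : qbin q (n : ℤ) 0 = 1 := by
  have := qbin_natCast q n 0 (Nat.zero_le n)
  simpa [qp_zero, div_self hn] using this

lemma qbin_self (q : ℂ) (n : ℕ) (hn : qp q q n ≠ 0) : qbin q (n : ℤ) (n : ℤ) = 1 := by
  have := qbin_natCast q n n le_rfl
  simpa [qp_zero, div_self hn] using this

/-- First q-Pascal rule. -/
lemma pascal1 (q : ℂ) (n : ℕ) (hD : ∀ m : ℕ, m ≤ n + 1 → qp q q m ≠ 0) (k : ℤ) :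
    qbin q ((n + 1 : ℕ) : ℤ) k = q ^ k * qbin q (n : ℤ) k + qbin q (n : ℤ) (k - 1) := by
  by_cases hk0 : k < 0
  · rw [qbin_neg q _ _ hk0, qbin_neg q _ _ hk0, qbin_neg q _ _ (by omega)]; ring
  by_cases hkn : (n : ℤ) + 1 < k
  · rw [qbin_gt q _ _ (by exact_mod_cast hkn), qbin_gt q _ _ (by omega),
      qbin_gt q _ _ (by omega)]; ring
  push_neg at hk0 hkn
  lift k to ℕ using hk0 with kk
  have hkk : kk ≤ n + 1 := by exact_mod_cast hkn
  rcases Nat.eq_zero_or_pos kk with h0 | h1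
  · subst h0
    simp only [Nat.cast_zero]
    rw [qbin_zero q (n+1) (hD _ le_rfl), qbin_zero q n (hD _ (by omega)),
      qbin_neg q _ _ (by omega)]
    simp
  rcases eq_or_lt_of_le hkk with he | hlt
  · subst he
    have h1 : ((n : ℤ) + 1 - 1) = (n : ℤ) := by ring
    rw [show ((n+1:ℕ):ℤ) = (n:ℤ)+1 by push_cast; ring] at *
    rw [show ((n:ℤ)+1) = ((n+1:ℕ):ℤ) by push_cast; ring]
    rw [qbin_self q (n+1) (hD _ le_rfl), qbin_gt q _ _ (by push_cast; omega)]
    rw [show ((n+1:ℕ):ℤ) - 1 = (n:ℤ) by push_cast; ring, qbin_self q n (hD _ (by omega))]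
    ring
  -- now 1 ≤ kk ≤ n
  obtain ⟨a, rfl⟩ : ∃ a, kk = a + 1 := ⟨kk - 1, by omega⟩
  obtain ⟨b, rfl⟩ : ∃ b, n = a + 1 + b := ⟨n - (a + 1), by omega⟩
  have e1 : qbin q ((a+1+b+1:ℕ):ℤ) ((a+1:ℕ):ℤ) = qp q q (a+1+b+1) / (qp q q (a+1) * qp q q (b+1)) := by
    have := qbin_natCast q (a+1+b+1) (a+1) (by omega)
    rwa [show a+1+b+1 - (a+1) = b+1 by omega] at this
  have e2 : qbin q ((a+1+b:ℕ):ℤ) ((a+1:ℕ):ℤ) = qp q q (a+1+b) / (qp q q (a+1) * qp q q b) := by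
    have := qbin_natCast q (a+1+b) (a+1) (by omega)
    rwa [show a+1+b - (a+1) = b by omega] at this
  have e3 : qbin q ((a+1+b:ℕ):ℤ) (((a+1:ℕ):ℤ) - 1) = qp q q (a+1+b) / (qp q q a * qp q q (b+1)) := by
    have := qbin_natCast q (a+1+b) a (by omega)
    rw [show (((a+1:ℕ):ℤ) - 1) = ((a:ℕ):ℤ) by push_cast; ring]
    rwa [show a+1+b - a = b+1 by omega] at this
  rw [e1, e2, e3]
  have hA : qp q q a ≠ 0 := hD a (by omega)
  have hA1 : qp q q (a+1) ≠ 0 := hD _ (by omega)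
  have hB : qp q q b ≠ 0 := hD b (by omega)
  have hB1 : qp q q (b+1) ≠ 0 := hD _ (by omega)
  rw [show qp q q (a+1+b+1) = qp q q (a+1+b) * (1 - q ^ (a+1+b+1)) from qp_succ q (a+1+b),
    show qp q q (a+1) = qp q q a * (1 - q ^ (a+1)) from qp_succ q a,
    show qp q q (b+1) = qp q q b * (1 - q ^ (b+1)) from qp_succ q b,
    zpow_natCast]
  have hA1' : (1 : ℂ) - q ^ (a+1) ≠ 0 := by
    intro h; apply hA1; rw [qp_succ q a, h, mul_zero]
  have hB1' : (1 : ℂ) - q ^ (b+1) ≠ 0 := by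
    intro h; apply hB1; rw [qp_succ q b, h, mul_zero]
  field_simp
  ring

/-- Second q-Pascal rule. -/
lemma pascal2 (q : ℂ) (hq0 : q ≠ 0) (n : ℕ) (hD : ∀ m : ℕ, m ≤ n + 1 → qp q q m ≠ 0) (k : ℤ) :
    qbin q ((n + 1 : ℕ) : ℤ) k = qbin q (n : ℤ) k + q ^ ((n : ℤ) + 1 - k) * qbin q (n : ℤ) (k - 1) := by
  by_cases hk0 : k < 0
  · rw [qbin_neg q _ _ hk0, qbin_neg q _ _ hk0, qbin_neg q _ _ (by omega)]; ring
  by_cases hkn : (n : ℤ) + 1 < k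
  · rw [qbin_gt q _ _ (by exact_mod_cast hkn), qbin_gt q _ _ (by omega),
      qbin_gt q _ _ (by omega)]; ring
  push_neg at hk0 hkn
  lift k to ℕ using hk0 with kk
  have hkk : kk ≤ n + 1 := by exact_mod_cast hkn
  rcases Nat.eq_zero_or_pos kk with h0 | h1
  · subst h0
    simp only [Nat.cast_zero]
    rw [qbin_zero q (n+1) (hD _ le_rfl), qbin_zero q n (hD _ (by omega)),
      qbin_neg q _ _ (by omega)]
    simp
  rcases eq_or_lt_of_le hkk with he | hlt
  · subst he
    rw [show ((n+1:ℕ):ℤ) = (n:ℤ)+1 by push_cast; ring] at *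
    rw [show ((n:ℤ)+1) = ((n+1:ℕ):ℤ) by push_cast; ring]
    rw [qbin_self q (n+1) (hD _ le_rfl), qbin_gt q _ _ (by push_cast; omega)]
    rw [show ((n+1:ℕ):ℤ) - 1 = (n:ℤ) by push_cast; ring, qbin_self q n (hD _ (by omega))]
    rw [sub_self, zpow_zero]
    ring
  obtain ⟨a, rfl⟩ : ∃ a, kk = a + 1 := ⟨kk - 1, by omega⟩
  obtain ⟨b, rfl⟩ : ∃ b, n = a + 1 + b := ⟨n - (a + 1), by omega⟩
  have e1 : qbin q ((a+1+b+1:ℕ):ℤ) ((a+1:ℕ):ℤ) = qp q q (a+1+b+1) / (qp q q (a+1) * qp q q (b+1)) := by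
    have := qbin_natCast q (a+1+b+1) (a+1) (by omega)
    rwa [show a+1+b+1 - (a+1) = b+1 by omega] at this
  have e2 : qbin q ((a+1+b:ℕ):ℤ) ((a+1:ℕ):ℤ) = qp q q (a+1+b) / (qp q q (a+1) * qp q q b) := by
    have := qbin_natCast q (a+1+b) (a+1) (by omega)
    rwa [show a+1+b - (a+1) = b by omega] at this
  have e3 : qbin q ((a+1+b:ℕ):ℤ) (((a+1:ℕ):ℤ) - 1) = qp q q (a+1+b) / (qp q q a * qp q q (b+1)) := by
    have := qbin_natCast q (a+1+b) a (by omega)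
    rw [show (((a+1:ℕ):ℤ) - 1) = ((a:ℕ):ℤ) by push_cast; ring]
    rwa [show a+1+b - a = b+1 by omega] at this
  rw [e1, e2, e3]
  rw [show ((a+1+b:ℕ):ℤ) + 1 - ((a+1:ℕ):ℤ) = ((b+1:ℕ):ℤ) by push_cast; ring, zpow_natCast]
  have hA : qp q q a ≠ 0 := hD a (by omega)
  have hA1 : qp q q (a+1) ≠ 0 := hD _ (by omega)
  have hB : qp q q b ≠ 0 := hD b (by omega)
  have hB1 : qp q q (b+1) ≠ 0 := hD _ (by omega)
  rw [show qp q q (a+1+b+1) = qp q q (a+1+b) * (1 - q ^ (a+1+b+1)) from qp_succ q (a+1+b),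
    show qp q q (a+1) = qp q q a * (1 - q ^ (a+1)) from qp_succ q a,
    show qp q q (b+1) = qp q q b * (1 - q ^ (b+1)) from qp_succ q b]
  have hA1' : (1 : ℂ) - q ^ (a+1) ≠ 0 := by
    intro h; apply hA1; rw [qp_succ q a, h, mul_zero]
  have hB1' : (1 : ℂ) - q ^ (b+1) ≠ 0 := by
    intro h; apply hB1; rw [qp_succ q b, h, mul_zero]
  field_simp
  ring

/-- Ratio identity: `(1-q^u)[n,u] = (1-q^{n-u+1})[n,u-1]`. -/
lemma qbin_ratio (q : ℂ) (n : ℕ) (hD : ∀ m : ℕ, m ≤ n + 1 → qp q q m ≠ 0) (u : ℤ) :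
    (1 - q ^ u) * qbin q (n : ℤ) u = (1 - q ^ ((n : ℤ) - u + 1)) * qbin q (n : ℤ) (u - 1) := by
  by_cases hk0 : u < 0
  · rw [qbin_neg q _ _ hk0, qbin_neg q _ _ (by omega)]; ring
  by_cases hkn : (n : ℤ) + 1 < u
  · rw [qbin_gt q _ _ (by omega), qbin_gt q _ _ (by omega)]; ring
  push_neg at hk0 hkn
  lift u to ℕ using hk0 with kk
  have hkk : kk ≤ n + 1 := by exact_mod_cast hkn
  rcases Nat.eq_zero_or_pos kk with h0 | h1
  · subst h0
    simp only [Nat.cast_zero]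
    rw [qbin_neg q (n : ℤ) (0 - 1) (by omega)]
    simp
  rcases eq_or_lt_of_le hkk with he | hlt
  · subst he
    rw [qbin_gt q _ _ (by push_cast; omega),
      show (n:ℤ) - ((n+1:ℕ):ℤ) + 1 = 0 by push_cast; ring, zpow_zero]
    ring
  obtain ⟨a, rfl⟩ : ∃ a, kk = a + 1 := ⟨kk - 1, by omega⟩
  obtain ⟨b, rfl⟩ : ∃ b, n = a + 1 + b := ⟨n - (a + 1), by omega⟩
  have e2 : qbin q ((a+1+b:ℕ):ℤ) ((a+1:ℕ):ℤ) = qp q q (a+1+b) / (qp q q (a+1) * qp q q b) := by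
    have := qbin_natCast q (a+1+b) (a+1) (by omega)
    rwa [show a+1+b - (a+1) = b by omega] at this
  have e3 : qbin q ((a+1+b:ℕ):ℤ) (((a+1:ℕ):ℤ) - 1) = qp q q (a+1+b) / (qp q q a * qp q q (b+1)) := by
    have := qbin_natCast q (a+1+b) a (by omega)
    rw [show (((a+1:ℕ):ℤ) - 1) = ((a:ℕ):ℤ) by push_cast; ring]
    rwa [show a+1+b - a = b+1 by omega] at this
  rw [e2, e3, zpow_natCast,
    show ((a+1+b:ℕ):ℤ) - ((a+1:ℕ):ℤ) + 1 = ((b+1:ℕ):ℤ) by push_cast; ring, zpow_natCast]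
  have hA : qp q q a ≠ 0 := hD a (by omega)
  have hA1 : qp q q (a+1) ≠ 0 := hD _ (by omega)
  have hB : qp q q b ≠ 0 := hD b (by omega)
  have hB1 : qp q q (b+1) ≠ 0 := hD _ (by omega)
  rw [show qp q q (a+1) = qp q q a * (1 - q ^ (a+1)) from qp_succ q a,
    show qp q q (b+1) = qp q q b * (1 - q ^ (b+1)) from qp_succ q b]
  have hA1' : (1 : ℂ) - q ^ (a+1) ≠ 0 := by
    intro h; apply hA1; rw [qp_succ q a, h, mul_zero]
  have hB1' : (1 : ℂ) - q ^ (b+1) ≠ 0 := by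
    intro h; apply hB1; rw [qp_succ q b, h, mul_zero]
  field_simp

/-- Technical q-binomial identity (Lemma 3.9). -/
theorem tech_qbinom_two (q : ℂ) (hq0 : q ≠ 0) (N M : ℕ) (hM : M ≤ N)
    (hq : ∀ k : ℕ, 1 ≤ k → k ≤ N + 1 → qp q q k ≠ 0) (j u : ℤ) :
    qbin q ((M : ℤ) + 1) (j - u) * qbin q ((N : ℤ) - M) u
      - q ^ (2 * j - 2 * u - (M : ℤ)) * qbin q ((M : ℤ) + 1) (j - u + 1)
          * qbin q ((N : ℤ) - M) (u - 1)
    = q ^ j * qbin q M (j - u) * qbin q ((N : ℤ) - M) u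
      - q ^ (2 * j - 2 * u - (M : ℤ)) * qbin q M (j - u + 1) * qbin q ((N : ℤ) - M) (u - 1)
      + qbin q M (j - u - 1) * qbin q ((N : ℤ) - M) u
      - q ^ ((N : ℤ) + j + 1 - 2 * u - M) * qbin q M (j - u) * qbin q ((N : ℤ) - M) (u - 1) := by
  have hD : ∀ m : ℕ, m ≤ N + 1 → qp q q m ≠ 0 := by
    intro m hm
    rcases Nat.eq_zero_or_pos m with h0 | h1
    · subst h0; rw [qp_zero]; exact one_ne_zero
    · exact hq m h1 hm
  have c1 : (M : ℤ) + 1 = ((M + 1 : ℕ) : ℤ) := by push_cast; ring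
  have c2 : (N : ℤ) - M = ((N - M : ℕ) : ℤ) := by omega
  rw [c1, c2]
  have P1 := pascal1 q M (fun m hm => hD m (by omega)) (j - u)
  have P2 := pascal2 q hq0 M (fun m hm => hD m (by omega)) (j - u + 1)
  have R := qbin_ratio q (N - M) (fun m hm => hD m (by omega)) u
  rw [show j - u + 1 - 1 = j - u by ring] at P2
  have h1 : q ^ (2 * j - 2 * u - (M : ℤ)) * q ^ ((M : ℤ) + 1 - (j - u + 1)) = q ^ (j - u) := by
    rw [← zpow_add₀ hq0]; congr 1; ring
  have h3 : q ^ j = q ^ u * q ^ (j - u) := by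
    rw [← zpow_add₀ hq0]; congr 1; ring
  have h2 : q ^ ((N : ℤ) + j + 1 - 2 * u - (M : ℤ))
      = q ^ (((N - M : ℕ) : ℤ) - u + 1) * q ^ (j - u) := by
    rw [← zpow_add₀ hq0]; congr 1; omega
  linear_combination (qbin q ((N - M : ℕ) : ℤ) u) * P1
    - q ^ (2 * j - 2 * u - (M : ℤ)) * qbin q ((N - M : ℕ) : ℤ) (u - 1) * P2
    + q ^ (j - u) * qbin q (M : ℤ) (j - u) * R
    - qbin q (M : ℤ) (j - u) * qbin q ((N - M : ℕ) : ℤ) u * h3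
    + qbin q (M : ℤ) (j - u) * qbin q ((N - M : ℕ) : ℤ) (u - 1) * h2
    - qbin q (M : ℤ) (j - u) * qbin q ((N - M : ℕ) : ℤ) (u - 1) * h1
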